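/- arXiv:1312.3452 — 7 statements merged into one kernel-verified Lean document; each statement's English description precedes it below -/
import Mathlib

section
/- Let X and Y be meromorphic vector fields on a domain U ⊂ ℂ² with X and Y generically linearly independent (the tangency locus {det(X,Y)=0} has codimension ≥ 1), and let N be a formal power series based at a point p ∈ U. If both X·N and Y·N are (restrictions of) meromorphic functions on U, then N is a convergent power series. -/
/- Statement 1: if X, Y are meromorphic vector fields on a domain of ℂ², generically
linearly independent, and N is a formal power series at a point p with X·N and Y·N
meromorphic, then N converges.
Formalization: germs are translated to the origin.  A formal series is *convergent* when
its coefficients are bounded on some polydisc (geometric bound).  A meromorphic vector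
field is a holomorphic (= convergent) vector field divided by a convergent function; since
multiplying X by a holomorphic denominator changes neither the meromorphy of X·N nor the
generic independence, X and Y are represented by their convergent numerators A, C, and
`X·N meromorphic` reads: d·(A·N) = g for some convergent g, d with d ≠ 0. -/

noncomputable section
open MvPowerSeries

abbrev R2 := MvPowerSeries (Fin 2) ℂ

/-- formal partial derivative ∂/∂xᵢ of a power series -/
def pd (i : Fin 2) (f : R2) : R2 :=
  fun d => ((d i : ℂ) + 1) * MvPowerSeries.coeff (d + Finsupp.single i 1) f

/-- derivative of f along the formal vector field Z -/
def lieD (Z : Fin 2 → R2) (f : R2) : R2 := Z 0 * pd 0 f + Z 1 * pd 1 f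

/-- a formal power series is convergent iff its coefficients are geometrically bounded -/
def IsConv (f : R2) : Prop :=
  ∃ r C : ℝ, 0 < r ∧ ∀ d : Fin 2 →₀ ℕ,
    ‖MvPowerSeries.coeff d f‖ * r ^ (d.sum fun _ n => n) ≤ C

/-!
By Cramer's rule, `det(X,Y) d_X d_Y ∂ᵢN` is a polynomial in the convergent data, so the theorem
reduces to two facts about `ℂ[[x₀, x₁]]`: a series whose partial derivatives converge converges,
and convergent series are closed under exact division (`e ≠ 0` and `e f` convergent ⇒ `f`
convergent).

For the division, weight monomials by `ω p = N p₀ + p₁`: with `μ` lexicographically minimal in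
the support of `e` and `N = μ₁ + 1`, the coefficient `e_μ` is the only one of minimal weight. Then
`e_μ f_m = (e f)_{m+μ} - ∑_{p ≠ μ} e_p f_{m+μ-p}` involves only `f_q` with `ω q < ω m`, and a bound
`‖f_m‖ ≤ M b^{ω m}` propagates by induction on the weight once `b` is so large that
`∑_{p ≠ μ} ‖e_p‖ b^{ω μ - ω p} ≤ ‖e_μ‖ / 2`.
-/

open Filter Finset.HasAntidiagonal

section Division

variable {σ 𝕜 : Type*} [DecidableEq σ] [NormedField 𝕜] {e f : MvPowerSeries σ 𝕜}
  {ω : (σ →₀ ℕ) →+ ℕ} {μ : σ →₀ ℕ} {b : ℝ}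

lemma fst_injOn_antidiagonal (d : σ →₀ ℕ) :
    Set.InjOn Prod.fst (antidiagonal d : Set ((σ →₀ ℕ) × (σ →₀ ℕ))) := by
  intro p hp q hq h
  rw [Finset.mem_coe, mem_antidiagonal] at hp hq
  exact Prod.ext h (add_left_cancel (hp.trans (h ▸ hq.symm)))

lemma fst_ne_of_mem_erase_antidiagonal {m : σ →₀ ℕ} {p : (σ →₀ ℕ) × (σ →₀ ℕ)}
    (hp : p ∈ (antidiagonal (m + μ)).erase (μ, m)) : p.1 ≠ μ := by
  intro h
  obtain ⟨hne, hp⟩ := Finset.mem_erase.mp hp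
  rw [mem_antidiagonal] at hp
  exact hne (Prod.ext h (add_left_cancel (hp.trans (by rw [h, add_comm]) : p.1 + p.2 = p.1 + m)))

lemma norm_sum_erase_antidiagonal_le (hmin : ∀ p, coeff p e ≠ 0 → p ≠ μ → ω μ < ω p)
    (hb : 0 < b) (htail : ∀ s : Finset (σ →₀ ℕ), μ ∉ s →
      ∑ p ∈ s, ‖coeff p e‖ * b ^ ω μ / b ^ ω p ≤ ‖coeff μ e‖ / 2)
    {m : σ →₀ ℕ} {M : ℝ} (hM : 0 ≤ M) (ih : ∀ q, ω q < ω m → ‖coeff q f‖ ≤ M * b ^ ω q) :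
    ‖∑ p ∈ (antidiagonal (m + μ)).erase (μ, m), coeff p.1 e * coeff p.2 f‖ ≤
      M * b ^ ω m * (‖coeff μ e‖ / 2) := by
  set S := (antidiagonal (m + μ)).erase (μ, m)
  have hterm : ∀ p ∈ S, ‖coeff p.1 e * coeff p.2 f‖ ≤
      M * b ^ ω m * (‖coeff p.1 e‖ * b ^ ω μ / b ^ ω p.1) := by
    intro p hp
    by_cases he : coeff p.1 e = 0
    · simp [he]
    have hω : ω p.1 + ω p.2 = ω m + ω μ := by
      rw [← map_add, ← map_add, mem_antidiagonal.mp (Finset.mem_of_mem_erase hp)]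
    have hlt : ω p.2 < ω m := by
      have := hmin p.1 he (fst_ne_of_mem_erase_antidiagonal hp); omega
    have hb2 : b ^ ω p.2 = b ^ ω m * b ^ ω μ / b ^ ω p.1 := by
      rw [eq_div_iff (by positivity), ← pow_add, ← pow_add, add_comm, hω]
    calc ‖coeff p.1 e * coeff p.2 f‖ = ‖coeff p.1 e‖ * ‖coeff p.2 f‖ := norm_mul _ _
      _ ≤ ‖coeff p.1 e‖ * (M * b ^ ω p.2) := by gcongr; exact ih _ hlt
      _ = _ := by rw [hb2]; ring
  have hμS : μ ∉ S.image Prod.fst := by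
    simp only [Finset.mem_image, not_exists, not_and]
    exact fun p hp => fst_ne_of_mem_erase_antidiagonal hp
  have hinj : Set.InjOn Prod.fst (S : Set ((σ →₀ ℕ) × (σ →₀ ℕ))) :=
    (fst_injOn_antidiagonal _).mono (Finset.coe_subset.mpr (Finset.erase_subset _ _))
  calc ‖∑ p ∈ S, coeff p.1 e * coeff p.2 f‖
      ≤ ∑ p ∈ S, M * b ^ ω m * (‖coeff p.1 e‖ * b ^ ω μ / b ^ ω p.1) :=
        (norm_sum_le _ _).trans (Finset.sum_le_sum hterm)
    _ = M * b ^ ω m * ∑ q ∈ S.image Prod.fst, ‖coeff q e‖ * b ^ ω μ / b ^ ω q := by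
        rw [Finset.sum_image hinj, Finset.mul_sum]
    _ ≤ M * b ^ ω m * (‖coeff μ e‖ / 2) := by gcongr; exact htail _ hμS

theorem norm_coeff_le_of_mul_of_dominant (hμ : coeff μ e ≠ 0)
    (hmin : ∀ p, coeff p e ≠ 0 → p ≠ μ → ω μ < ω p) {Cg : ℝ} (hb : 0 < b)
    (hg : ∀ d, ‖coeff d (e * f)‖ ≤ Cg * b ^ ω d)
    (htail : ∀ s : Finset (σ →₀ ℕ), μ ∉ s →
      ∑ p ∈ s, ‖coeff p e‖ * b ^ ω μ / b ^ ω p ≤ ‖coeff μ e‖ / 2)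
    (m : σ →₀ ℕ) : ‖coeff m f‖ ≤ 2 * Cg * b ^ ω μ / ‖coeff μ e‖ * b ^ ω m := by
  set ε := ‖coeff μ e‖
  set M := 2 * Cg * b ^ ω μ / ε
  have hε : 0 < ε := norm_pos_iff.mpr hμ
  have hM : 0 ≤ M := by
    have hCg : 0 ≤ Cg := by simpa using (norm_nonneg _).trans (hg 0)
    positivity
  have hMε : M * ε = 2 * Cg * b ^ ω μ := div_mul_cancel₀ _ hε.ne'
  induction hn : ω m using Nat.strong_induction_on generalizing m with
  | _ n ih =>
  subst hn
  have hsplit : coeff (m + μ) (e * f) = coeff μ e * coeff m f +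
      ∑ p ∈ (antidiagonal (m + μ)).erase (μ, m), coeff p.1 e * coeff p.2 f := by
    have hmem : (μ, m) ∈ antidiagonal (m + μ) := mem_antidiagonal.mpr (add_comm μ m)
    rw [coeff_mul]
    exact (Finset.add_sum_erase _ _ hmem).symm
  have hrest := norm_sum_erase_antidiagonal_le (f := f) hmin hb htail hM fun q hq => ih _ hq _ rfl
  refine le_of_mul_le_mul_left ?_ hε
  calc ε * ‖coeff m f‖ = ‖coeff (m + μ) (e * f) -
        ∑ p ∈ (antidiagonal (m + μ)).erase (μ, m), coeff p.1 e * coeff p.2 f‖ := by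
        rw [hsplit, add_sub_cancel_right, norm_mul]
    _ ≤ Cg * b ^ ω (m + μ) + M * b ^ ω m * (ε / 2) :=
        (norm_sub_le _ _).trans (add_le_add (hg _) hrest)
    _ = ε * (M * b ^ ω m) := by
        rw [map_add, pow_add]; linear_combination (b ^ ω m / 2) * hMε.symm

end Division

lemma sum_inv_two_pow_degree_le (s : Finset (Fin 2 →₀ ℕ)) :
    ∑ p ∈ s, (2⁻¹ : ℝ) ^ p.degree ≤ 4 := by
  have hsum : Summable fun n : ℕ => ‖(2⁻¹ : ℝ) ^ n‖ := by
    simpa using summable_geometric_two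
  have hprod : Summable fun q : ℕ × ℕ => (2⁻¹ : ℝ) ^ q.1 * (2⁻¹ : ℝ) ^ q.2 :=
    summable_mul_of_summable_norm hsum hsum
  have hinj : Set.InjOn (fun p : Fin 2 →₀ ℕ => (p 0, p 1)) s := by
    intro p _ q _ h
    simp only [Prod.mk.injEq] at h
    ext i; fin_cases i <;> simp [h.1, h.2]
  calc ∑ p ∈ s, (2⁻¹ : ℝ) ^ p.degree
      = ∑ q ∈ s.image fun p => (p 0, p 1), (2⁻¹ : ℝ) ^ q.1 * (2⁻¹ : ℝ) ^ q.2 := by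
        rw [Finset.sum_image hinj]
        simp [Finsupp.degree_eq_sum, Fin.sum_univ_two, pow_add]
    _ ≤ ∑' q : ℕ × ℕ, (2⁻¹ : ℝ) ^ q.1 * (2⁻¹ : ℝ) ^ q.2 :=
        hprod.sum_le_tsum _ fun _ _ => by positivity
    _ = 4 := by
        rw [← tsum_mul_tsum_of_summable_norm hsum hsum, tsum_geometric_inv_two]
        norm_num

namespace IsConv

lemma of_norm_coeff_le {f : R2} {C R : ℝ} (hR : 0 < R)
    (h : ∀ d, ‖coeff d f‖ ≤ C * R ^ d.degree) : IsConv f := by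
  refine ⟨R⁻¹, C, inv_pos.mpr hR, fun d => ?_⟩
  calc ‖coeff d f‖ * R⁻¹ ^ d.degree ≤ C * R ^ d.degree * R⁻¹ ^ d.degree := by
        gcongr; exact h d
    _ = C := by rw [mul_assoc, ← mul_pow, mul_inv_cancel₀ hR.ne', one_pow, mul_one]

lemma eventually_norm_coeff_le {f : R2} (hf : IsConv f) :
    ∀ᶠ R in atTop, ∃ C, 0 ≤ C ∧ ∀ d, ‖coeff d f‖ ≤ C * R ^ d.degree := by
  obtain ⟨r, C, hr, hC⟩ := hf
  filter_upwards [eventually_ge_atTop r⁻¹] with R hR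
  have hC0 : 0 ≤ C := by
    have := hC 0
    simp only [Finsupp.sum_zero_index, pow_zero, mul_one] at this
    exact (norm_nonneg _).trans this
  refine ⟨C, hC0, fun d => ?_⟩
  have hrd : 0 < r ^ d.degree := by positivity
  calc ‖coeff d f‖ ≤ C * r⁻¹ ^ d.degree := by
        rw [inv_pow, ← div_eq_mul_inv, le_div_iff₀ hrd]; exact hC d
    _ ≤ C * R ^ d.degree := by gcongr

lemma sub {f g : R2} (hf : IsConv f) (hg : IsConv g) : IsConv (f - g) := by
  obtain ⟨R, ⟨C₁, -, h₁⟩, ⟨C₂, -, h₂⟩, hR⟩ :=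
    (hf.eventually_norm_coeff_le.and (hg.eventually_norm_coeff_le.and
      (eventually_gt_atTop 0))).exists
  refine of_norm_coeff_le (C := C₁ + C₂) hR fun d => ?_
  calc ‖coeff d (f - g)‖ ≤ ‖coeff d f‖ + ‖coeff d g‖ := by rw [map_sub]; exact norm_sub_le _ _
    _ ≤ (C₁ + C₂) * R ^ d.degree := by linarith [h₁ d, h₂ d]

lemma mul {f g : R2} (hf : IsConv f) (hg : IsConv g) : IsConv (f * g) := by
  obtain ⟨R, ⟨C₁, hC₁, h₁⟩, ⟨C₂, hC₂, h₂⟩, hR⟩ :=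
    (hf.eventually_norm_coeff_le.and (hg.eventually_norm_coeff_le.and
      (eventually_gt_atTop 0))).exists
  refine of_norm_coeff_le (R := 2 * R) (C := 4 * (C₁ * C₂)) (by positivity) fun d => ?_
  have hterm : ∀ p ∈ antidiagonal d, ‖coeff p.1 f * coeff p.2 g‖ ≤
      C₁ * C₂ * (2 * R) ^ d.degree * 2⁻¹ ^ p.1.degree := by
    intro p hp
    rw [mem_antidiagonal] at hp
    calc ‖coeff p.1 f * coeff p.2 g‖ ≤ C₁ * R ^ p.1.degree * (C₂ * R ^ p.2.degree) := by
          rw [norm_mul]; exact mul_le_mul (h₁ _) (h₂ _) (norm_nonneg _) (by positivity)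
      _ = C₁ * C₂ * (2 * R) ^ d.degree * 2⁻¹ ^ p.1.degree / 2 ^ p.2.degree := by
          rw [← hp, map_add, mul_pow, pow_add, pow_add, inv_pow]; field_simp
      _ ≤ C₁ * C₂ * (2 * R) ^ d.degree * 2⁻¹ ^ p.1.degree :=
          div_le_self (by positivity) (one_le_pow₀ one_le_two)
  calc ‖coeff d (f * g)‖ ≤ ∑ p ∈ antidiagonal d, ‖coeff p.1 f * coeff p.2 g‖ := by
        rw [coeff_mul]; exact norm_sum_le _ _
    _ ≤ ∑ p ∈ antidiagonal d, C₁ * C₂ * (2 * R) ^ d.degree * 2⁻¹ ^ p.1.degree :=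
        Finset.sum_le_sum hterm
    _ = C₁ * C₂ * (2 * R) ^ d.degree * ∑ q ∈ (antidiagonal d).image Prod.fst, 2⁻¹ ^ q.degree := by
        rw [← Finset.mul_sum, Finset.sum_image (fst_injOn_antidiagonal d)]
    _ ≤ 4 * (C₁ * C₂) * (2 * R) ^ d.degree := by
        have := sum_inv_two_pow_degree_le ((antidiagonal d).image Prod.fst)
        have : 0 ≤ C₁ * C₂ * (2 * R) ^ d.degree := by positivity
        nlinarith

end IsConv

lemma weight_two_apply (N : ℕ) (p : Fin 2 →₀ ℕ) : Finsupp.weight ![N, 1] p = p 0 * N + p 1 := by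
  simp [Finsupp.weight_eq_sum, Fin.sum_univ_two]

lemma exists_weight_strict_min {e : R2} (he : e ≠ 0) :
    ∃ (ω : (Fin 2 →₀ ℕ) →+ ℕ) (N : ℕ) (μ : Fin 2 →₀ ℕ),
      (∀ p, p.degree ≤ ω p ∧ ω p ≤ N * p.degree) ∧ coeff μ e ≠ 0 ∧
      ∀ p, coeff p e ≠ 0 → p ≠ μ → ω μ < ω p := by
  obtain ⟨p₀, hp₀⟩ : ∃ p, coeff p e ≠ 0 := by
    by_contra! h
    exact he (MvPowerSeries.ext fun p => by simpa using h p)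
  let key : (Fin 2 →₀ ℕ) → ℕ ×ₗ ℕ := fun p => toLex (p 0, p 1)
  obtain ⟨μ, hμ, hmin⟩ : ∃ μ, coeff μ e ≠ 0 ∧ ∀ p, coeff p e ≠ 0 → key μ ≤ key p :=
    ⟨_, Function.argminOn_mem key {p | coeff p e ≠ 0} ⟨p₀, hp₀⟩,
      fun p hp => Function.argminOn_le key {p | coeff p e ≠ 0} hp⟩
  refine ⟨Finsupp.weight ![μ 1 + 1, 1], μ 1 + 1, μ, fun p => ?_, hμ, fun p hp hpμ => ?_⟩
  · rw [weight_two_apply, Finsupp.degree_eq_sum, Fin.sum_univ_two]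
    constructor <;> nlinarith
  have hne : p 0 ≠ μ 0 ∨ p 1 ≠ μ 1 := by
    by_contra! h
    exact hpμ (Finsupp.ext fun i => by fin_cases i <;> simp [h.1, h.2])
  rw [weight_two_apply, weight_two_apply]
  rcases Prod.Lex.toLex_le_toLex.mp (hmin p hp) with h | ⟨h0, h1⟩
  · nlinarith
  · simp only at h0 h1; rw [h0]; omega

lemma sum_norm_coeff_mul_pow_div_le {e : R2} {ω : (Fin 2 →₀ ℕ) →+ ℕ}
    (hω : ∀ p, p.degree ≤ ω p) {μ : Fin 2 →₀ ℕ}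
    (hmin : ∀ p, coeff p e ≠ 0 → p ≠ μ → ω μ < ω p) {Ce t b : ℝ} (ht : 1 ≤ t) (htb : 2 * t ≤ b)
    (he : ∀ p, ‖coeff p e‖ ≤ Ce * t ^ p.degree) (s : Finset (Fin 2 →₀ ℕ)) (hs : μ ∉ s) :
    ∑ p ∈ s, ‖coeff p e‖ * b ^ ω μ / b ^ ω p ≤ 8 * Ce * (2 * t) ^ ω μ * (t / b) := by
  have hb : 0 < b := by linarith
  have hCe : 0 ≤ Ce := by simpa using (norm_nonneg _).trans (he 0)
  have hu : t / b ≤ 2⁻¹ := by rw [div_le_iff₀ hb]; linarith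
  have hterm : ∀ p ∈ s, ‖coeff p e‖ * b ^ ω μ / b ^ ω p ≤
      2 * Ce * (2 * t) ^ ω μ * (t / b) * 2⁻¹ ^ p.degree := by
    intro p hp
    by_cases hep : coeff p e = 0
    · rw [hep, norm_zero, zero_mul, zero_div]; positivity
    obtain ⟨k, hk⟩ := Nat.exists_eq_add_of_lt (hmin p hep (ne_of_mem_of_not_mem hp hs))
    have hpk : ω p = ω μ + (k + 1) := by omega
    calc ‖coeff p e‖ * b ^ ω μ / b ^ ω p ≤ Ce * t ^ ω p * b ^ ω μ / b ^ ω p := by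
          gcongr
          exact (he p).trans (mul_le_mul_of_nonneg_left (pow_le_pow_right₀ ht (hω p)) hCe)
      _ = Ce * t ^ ω μ * (t / b) * (t / b) ^ k := by
          rw [hpk, pow_add, pow_add, div_pow]; field_simp; ring
      _ ≤ Ce * t ^ ω μ * (t / b) * 2⁻¹ ^ k := by gcongr
      _ = 2 * Ce * (2 * t) ^ ω μ * (t / b) * 2⁻¹ ^ ω p := by
          have h2 : (2 : ℝ) ^ ω μ * 2⁻¹ ^ ω μ = 1 := by rw [← mul_pow]; norm_num
          rw [hpk, mul_pow, pow_add, pow_succ]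
          linear_combination (-(Ce * t ^ ω μ * (t / b) * 2⁻¹ ^ k)) * h2
      _ ≤ 2 * Ce * (2 * t) ^ ω μ * (t / b) * 2⁻¹ ^ p.degree :=
          mul_le_mul_of_nonneg_left
            (pow_le_pow_of_le_one (by norm_num) (by norm_num) (hω p)) (by positivity)
  calc ∑ p ∈ s, ‖coeff p e‖ * b ^ ω μ / b ^ ω p
      ≤ ∑ p ∈ s, 2 * Ce * (2 * t) ^ ω μ * (t / b) * 2⁻¹ ^ p.degree := Finset.sum_le_sum hterm
    _ = 2 * Ce * (2 * t) ^ ω μ * (t / b) * ∑ p ∈ s, 2⁻¹ ^ p.degree := by rw [Finset.mul_sum]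
    _ ≤ 2 * Ce * (2 * t) ^ ω μ * (t / b) * 4 := by
        gcongr; exact sum_inv_two_pow_degree_le s
    _ = 8 * Ce * (2 * t) ^ ω μ * (t / b) := by ring

theorem IsConv.of_mul_left {e f : R2} (he : e ≠ 0) (hce : IsConv e) (hcef : IsConv (e * f)) :
    IsConv f := by
  obtain ⟨ω, N, μ, hω, hμ, hmin⟩ := exists_weight_strict_min he
  obtain ⟨t, ⟨Ce, hCe, hbe⟩, ⟨Cg, hCg, hbg⟩, ht⟩ :=
    (hce.eventually_norm_coeff_le.and (hcef.eventually_norm_coeff_le.and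
      (eventually_ge_atTop 1))).exists
  set ε := ‖coeff μ e‖
  have hε : 0 < ε := norm_pos_iff.mpr hμ
  set b := max (2 * t) (16 * Ce * (2 * t) ^ ω μ * t / ε)
  have htb : 2 * t ≤ b := le_max_left _ _
  have hb : 0 < b := by linarith
  have htail : ∀ s : Finset (Fin 2 →₀ ℕ), μ ∉ s →
      ∑ p ∈ s, ‖coeff p e‖ * b ^ ω μ / b ^ ω p ≤ ε / 2 := fun s hs =>
    (sum_norm_coeff_mul_pow_div_le (fun p => (hω p).1) hmin ht htb hbe s hs).trans <| by
      rw [mul_div_assoc', div_le_div_iff₀ hb two_pos, ← div_le_iff₀' hε]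
      have : 8 * Ce * (2 * t) ^ ω μ * t * 2 / ε = 16 * Ce * (2 * t) ^ ω μ * t / ε := by ring
      linarith [le_max_right (2 * t) (16 * Ce * (2 * t) ^ ω μ * t / ε)]
  have hg : ∀ d, ‖coeff d (e * f)‖ ≤ Cg * b ^ ω d := fun d =>
    (hbg d).trans <| mul_le_mul_of_nonneg_left
      ((pow_le_pow_right₀ ht ((hω d).1)).trans (by gcongr; linarith)) hCg
  refine IsConv.of_norm_coeff_le (C := 2 * Cg * b ^ ω μ / ε) (R := b ^ N) (by positivity) fun m =>
    (norm_coeff_le_of_mul_of_dominant hμ hmin hb hg htail m).trans ?_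
  rw [← pow_mul]
  gcongr
  · linarith
  · exact (hω m).2

lemma norm_coeff_add_single_le_norm_coeff_pd (f : R2) (i : Fin 2) (d : Fin 2 →₀ ℕ) :
    ‖coeff (d + Finsupp.single i 1) f‖ ≤ ‖coeff d (pd i f)‖ := by
  change _ ≤ ‖((d i : ℂ) + 1) * _‖
  rw [norm_mul, ← Nat.cast_add_one, Complex.norm_natCast]
  exact le_mul_of_one_le_left (norm_nonneg _) (by simp)

theorem IsConv.of_pd {f : R2} (hf₀ : IsConv (pd 0 f)) (hf₁ : IsConv (pd 1 f)) : IsConv f := by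
  obtain ⟨R, ⟨C₀, hC₀, h₀⟩, ⟨C₁, hC₁, h₁⟩, hR⟩ :=
    (hf₀.eventually_norm_coeff_le.and (hf₁.eventually_norm_coeff_le.and
      (eventually_ge_atTop 1))).exists
  have hpd : ∀ i d, ‖coeff d (pd i f)‖ ≤ max C₀ C₁ * R ^ d.degree := by
    intro i d
    fin_cases i
    · exact (h₀ d).trans (by gcongr; exact le_max_left _ _)
    · exact (h₁ d).trans (by gcongr; exact le_max_right _ _)
  refine IsConv.of_norm_coeff_le (C := max (max C₀ C₁) ‖coeff 0 f‖) (R := R) (by positivity)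
    fun d => ?_
  obtain rfl | ⟨i, hi⟩ := eq_or_ne d 0 |>.imp_right fun hd => Finsupp.ne_iff.mp hd
  · simp
  have hd : d - Finsupp.single i 1 + Finsupp.single i 1 = d :=
    tsub_add_cancel_of_le (Finsupp.single_le_iff.mpr (Nat.one_le_iff_ne_zero.mpr hi))
  have hdeg : (d - Finsupp.single i 1).degree ≤ d.degree := by
    conv_rhs => rw [← hd, map_add, Finsupp.degree_single]
    omega
  calc ‖coeff d f‖ ≤ ‖coeff (d - Finsupp.single i 1) (pd i f)‖ := by
        have := norm_coeff_add_single_le_norm_coeff_pd f i (d - Finsupp.single i 1)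
        rwa [hd] at this
    _ ≤ max C₀ C₁ * R ^ (d - Finsupp.single i 1).degree := hpd i _
    _ ≤ max (max C₀ C₁) ‖coeff 0 f‖ * R ^ d.degree :=
        mul_le_mul (le_max_left _ _) (pow_le_pow_right₀ hR hdeg) (by positivity) (by positivity)

theorem stmt1 (A C : Fin 2 → R2)
    (hA : ∀ i, IsConv (A i)) (hC : ∀ i, IsConv (C i))
    -- X ⋔ Y : the tangency locus {det(X,Y) = 0} has codimension ≥ 1 :
    (htr : A 0 * C 1 - A 1 * C 0 ≠ 0)
    (N : R2)
    -- X·N is meromorphic :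
    (hXN : ∃ g d : R2, IsConv g ∧ IsConv d ∧ d ≠ 0 ∧ d * lieD A N = g)
    -- Y·N is meromorphic :
    (hYN : ∃ g d : R2, IsConv g ∧ IsConv d ∧ d ≠ 0 ∧ d * lieD C N = g) :
    IsConv N := by
  obtain ⟨gX, dX, hgX, hdX, hdX0, hX⟩ := hXN
  obtain ⟨gY, dY, hgY, hdY, hdY0, hY⟩ := hYN
  rw [lieD] at hX hY
  have hΔ : IsConv ((A 0 * C 1 - A 1 * C 0) * (dX * dY)) :=
    (((hA 0).mul (hC 1)).sub ((hA 1).mul (hC 0))).mul (hdX.mul hdY)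
  have cramer₀ : (A 0 * C 1 - A 1 * C 0) * (dX * dY) * pd 0 N =
      C 1 * dY * gX - A 1 * dX * gY := by
    linear_combination (C 1 * dY) * hX - (A 1 * dX) * hY
  have cramer₁ : (A 0 * C 1 - A 1 * C 0) * (dX * dY) * pd 1 N =
      A 0 * dX * gY - C 0 * dY * gX := by
    linear_combination (A 0 * dX) * hY - (C 0 * dY) * hX
  have hΔ₀ := mul_ne_zero htr (mul_ne_zero hdX0 hdY0)
  refine IsConv.of_pd (IsConv.of_mul_left hΔ₀ hΔ ?_) (IsConv.of_mul_left hΔ₀ hΔ ?_)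
  · rw [cramer₀]
    exact (((hC 1).mul hdY).mul hgX).sub (((hA 1).mul hdX).mul hgY)
  · rw [cramer₁]
    exact (((hA 0).mul hdX).mul hgY).sub (((hC 0).mul hdY).mul hgX)
end
end

section
/- Let Z = A∂x + B∂y and Y = C∂x + D∂y be meromorphic vector field germs at the origin of ℂ² with [Z,Y] = δY, and set Δ := AD − BC. Then Z·Δ = (δ + ∂A/∂x + ∂B/∂y)·Δ. In particular the tangency locus {Δ=0} is invariant by Z (a union of separatrices of Z). -/
/-!
`Z` acts as a derivation, so `Z·Δ = A·(Z·D) + D·(Z·A) − B·(Z·C) − C·(Z·B)`. The bracket relation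
replaces `Z·C` and `Z·D` by `δC + Y·A` and `δD + Y·B`; what remains,
`A·(Y·B) − B·(Y·A) + D·(Z·A) − C·(Z·B)`, is `(∂A/∂x + ∂B/∂y)·Δ` after expanding `Y` and `Z`.
-/

noncomputable section

/-- ∂/∂x at p -/
def dX (f : ℂ × ℂ → ℂ) (p : ℂ × ℂ) : ℂ := fderiv ℂ f p (1, 0)

/-- ∂/∂y at p -/
def dY (f : ℂ × ℂ → ℂ) (p : ℂ × ℂ) : ℂ := fderiv ℂ f p (0, 1)

/-- Lie derivative of the scalar function f along the vector field with components (A,B). -/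
def lieD2 (A B : ℂ × ℂ → ℂ) (f : ℂ × ℂ → ℂ) (p : ℂ × ℂ) : ℂ :=
  A p * dX f p + B p * dY f p

section LieDerivative

variable {A B f g : ℂ × ℂ → ℂ} {p : ℂ × ℂ}

theorem lieD2_fun_mul (hf : DifferentiableAt ℂ f p) (hg : DifferentiableAt ℂ g p) :
    lieD2 A B (fun q => f q * g q) p = f p * lieD2 A B g p + g p * lieD2 A B f p := by
  simp only [lieD2, dX, dY, fderiv_fun_mul hf hg, add_apply, smul_apply,
    smul_eq_mul]
  ring

theorem lieD2_fun_sub (hf : DifferentiableAt ℂ f p) (hg : DifferentiableAt ℂ g p) :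
    lieD2 A B (fun q => f q - g q) p = lieD2 A B f p - lieD2 A B g p := by
  simp only [lieD2, dX, dY, fderiv_fun_sub hf hg, sub_apply]
  ring

end LieDerivative

theorem stmt3 (A B C D : ℂ × ℂ → ℂ) (δ : ℂ) (p : ℂ × ℂ)
    (hA : DifferentiableAt ℂ A p) (hB : DifferentiableAt ℂ B p)
    (hC : DifferentiableAt ℂ C p) (hD : DifferentiableAt ℂ D p)
    -- [Z,Y] = δ Y, componentwise: Z·C − Y·A = δC and Z·D − Y·B = δD :
    (hbrk1 : lieD2 A B C p - lieD2 C D A p = δ * C p)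
    (hbrk2 : lieD2 A B D p - lieD2 C D B p = δ * D p) :
    lieD2 A B (fun q => A q * D q - B q * C q) p
      = (δ + dX A p + dY B p) * (A p * D p - B p * C p) := by
  rw [lieD2_fun_sub (hA.fun_mul hD) (hB.fun_mul hC), lieD2_fun_mul hA hD, lieD2_fun_mul hB hC]
  simp only [lieD2] at hbrk1 hbrk2 ⊢
  linear_combination A p * hbrk2 - B p * hbrk1
end
end

section
/- Let Z be a germ of a holomorphic vector field and Y = W/𝔭 a meromorphic vector field (W holomorphic vector field, 𝔭 holomorphic function, coprime) with [Z,Y] = δY and Y not holomorphic. Then the polar locus {𝔭 = 0} of Y is a separatrix of Z. -/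
/- Statement 5: if Z is a holomorphic vector field germ, Y = W/𝔭 a meromorphic vector
field (W holomorphic vector field and 𝔭 coprime, Y not holomorphic) with [Z,Y] = δY,
then the polar locus {𝔭 = 0} is a separatrix of Z, i.e. Z·𝔭 = K·𝔭 for some
holomorphic K.  Germs are represented by power series in ℂ[[x,y]]; the relation
[Z,Y] = δY is written with denominators cleared: 𝔭·[Z,W] = (δ𝔭 + Z·𝔭)·W. -/

noncomputable section
open MvPowerSeries

/-- Lie bracket of formal vector fields, componentwise. -/
def brk (Z W : Fin 2 → R2) (i : Fin 2) : R2 := lieD Z (W i) - lieD W (Z i)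

/-!
Clearing denominators in `[Z, W/𝔭] = δ W/𝔭` shows that `𝔭` divides `(δ𝔭 + Z·𝔭) W_i` for both
components of `W`. The ring `ℂ[[x,y]] ≃ ℂ[[y]][[x]]` is factorial because `ℂ[[y]]` is a principal
ideal domain, and `𝔭` is relatively prime to `gcd(W_0, W_1)`, so `𝔭` divides `δ𝔭 + Z·𝔭`.
-/

namespace MvPowerSeries

instance isDomain (σ R : Type*) [CommRing R] [IsDomain R] : IsDomain (MvPowerSeries σ R) :=
  NoZeroDivisors.to_isDomain _

variable (k : Type*) [Field k]

instance isPrincipalIdealRing_fin_one : IsPrincipalIdealRing (MvPowerSeries (Fin 1) k) :=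
  IsPrincipalIdealRing.of_surjective (renameEquiv k finOneEquiv).symm
    (renameEquiv k finOneEquiv).symm.surjective

instance uniqueFactorizationMonoid_fin_two : UniqueFactorizationMonoid (MvPowerSeries (Fin 2) k) :=
  (finSuccEquiv k 1).toMulEquiv.symm.uniqueFactorizationMonoid inferInstance

end MvPowerSeries

theorem dvd_of_dvd_mul_of_no_common_irreducible_factor {α : Type*} [CommMonoidWithZero α]
    [UniqueFactorizationMonoid α] {p u v a : α} (huv : ¬(u = 0 ∧ v = 0))
    (hcop : ∀ f, Irreducible f → f ∣ p → ¬(f ∣ u ∧ f ∣ v)) (hu : p ∣ a * u) (hv : p ∣ a * v) :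
    p ∣ a := by
  let := UniqueFactorizationMonoid.toGCDMonoid α
  have hrel : IsRelPrime p (gcd u v) :=
    WfDvdMonoid.isRelPrime_of_no_irreducible_factors (fun h => huv ((gcd_eq_zero_iff u v).1 h.2))
      fun f hf hfp hfg => hcop f hf hfp ⟨hfg.trans (gcd_dvd_left u v), hfg.trans (gcd_dvd_right u v)⟩
  exact hrel.dvd_of_dvd_mul_right ((dvd_gcd hu hv).trans (gcd_mul_left' a u v).dvd)

theorem stmt5_general (Z W : Fin 2 → R2) (𝔭 : R2) (δ : ℂ)
    -- Y ≠ 0 :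
    (hW : ¬ (W 0 = 0 ∧ W 1 = 0))
    -- 𝔭 and W are coprime :
    (hcop : ∀ f : R2, Irreducible f → f ∣ 𝔭 → ¬ (f ∣ W 0 ∧ f ∣ W 1))
    -- [Z, W/𝔭] = δ·(W/𝔭), denominators cleared: 𝔭·[Z,W] = (δ𝔭 + Z·𝔭)·W :
    (hbrk : ∀ i, 𝔭 * brk Z W i
      = (MvPowerSeries.C δ * 𝔭 + lieD Z 𝔭) * W i) :
    -- {𝔭 = 0} is a separatrix of Z :
    ∃ K : R2, lieD Z 𝔭 = K * 𝔭 := by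
  obtain ⟨c, hc⟩ : 𝔭 ∣ MvPowerSeries.C δ * 𝔭 + lieD Z 𝔭 :=
    dvd_of_dvd_mul_of_no_common_irreducible_factor hW hcop
      ⟨brk Z W 0, (hbrk 0).symm⟩ ⟨brk Z W 1, (hbrk 1).symm⟩
  exact ⟨c - MvPowerSeries.C δ, by linear_combination hc⟩

theorem stmt5 (Z W : Fin 2 → R2) (𝔭 : R2) (δ : ℂ)
    -- Y = W/𝔭 is not holomorphic : 𝔭 vanishes at the origin and is nonzero
    (h𝔭0 : MvPowerSeries.constantCoeff 𝔭 = 0) (h𝔭 : 𝔭 ≠ 0)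
    -- Y ≠ 0 :
    (hW : ¬ (W 0 = 0 ∧ W 1 = 0))
    -- 𝔭 and W are coprime :
    (hcop : ∀ f : R2, Irreducible f → f ∣ 𝔭 → ¬ (f ∣ W 0 ∧ f ∣ W 1))
    -- [Z, W/𝔭] = δ·(W/𝔭), denominators cleared: 𝔭·[Z,W] = (δ𝔭 + Z·𝔭)·W :
    (hbrk : ∀ i, 𝔭 * brk Z W i
      = (MvPowerSeries.C δ * 𝔭 + lieD Z 𝔭) * W i) :
    -- {𝔭 = 0} is a separatrix of Z :
    ∃ K : R2, lieD Z 𝔭 = K * 𝔭 :=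
  stmt5_general Z W 𝔭 δ hW hcop hbrk
end
end

section
/- Let Z be a germ of a meromorphic vector field at the origin of ℂ² and define its delta-lattice Δ(Z) := { δ ∈ ℂ : ∃ meromorphic Y with Y ⋔ Z and [Z,Y] = δY }. If (δ,Y) and (δ̃,Ỹ) are two transverse structures of Z with Ỹ = aZ + bY (a, b meromorphic, b ≠ 0), then Z·a = δ̃a, Z·b = (δ̃−δ)b, and for every n ∈ ℤ the pair (δ + n(δ̃−δ), bⁿY) is again a transverse structure; in particular Δ(Z) is an affine ℤ-lattice. -/
/-!
Expanding `⁅Z, a • Z + b • Y⁆` with the Leibniz rule `⁅Z, f • Y⁆ = Z f • Y + f • ⁅Z, Y⁆` gives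
`Z a • Z + (Z b + δ b) • Y`; comparing coefficients with `δ̃ • (a • Z + b • Y)` in the basis
`Z, Y` yields `Z a = δ̃ a` and `Z b = (δ̃ - δ) b`. Hence `Z (bⁿ) = n (δ̃ - δ) bⁿ`, and the same
Leibniz rule shows that `bⁿ • Y` is an eigenvector of `ad Z` with eigenvalue `δ + n (δ̃ - δ)`;
it stays transverse to `Z` because `bⁿ` is a unit.
-/

namespace Derivation

section CommRing

variable {R A : Type*} [CommRing R] [CommRing A] [Algebra R A]

lemma lie_smul_right (D E : Derivation R A A) (f : A) :
    ⁅D, f • E⁆ = D f • E + f • ⁅D, E⁆ := by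
  ext x
  simp only [commutator_apply, smul_apply, add_apply, smul_eq_mul, leibniz]
  ring

lemma lie_smul_eq_smul_of_apply_eq_smul {Z Y : Derivation R A A} {δ ε : R} {f : A}
    (hY : ⁅Z, Y⁆ = δ • Y) (hf : Z f = ε • f) :
    ⁅Z, f • Y⁆ = (δ + ε) • (f • Y) := by
  rw [lie_smul_right, hY, hf, smul_comm f δ Y, smul_assoc, ← add_smul, add_comm]

lemma apply_eq_smul_of_lie_add_eq_smul {Z Y : Derivation R A A} {δ δ' : R} {a b : A}
    (hZY : LinearIndependent A ![Z, Y]) (hY : ⁅Z, Y⁆ = δ • Y)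
    (h : ⁅Z, a • Z + b • Y⁆ = δ' • (a • Z + b • Y)) :
    Z a = δ' • a ∧ Z b = (δ' - δ) • b := by
  have hexp : ⁅Z, a • Z + b • Y⁆ = Z a • Z + (Z b + δ • b) • Y := by
    rw [lie_add, lie_smul_right, lie_smul_right, lie_self, hY, smul_zero, add_zero, add_smul,
      smul_assoc, smul_comm b δ Y]
  have hrhs : δ' • (a • Z + b • Y) = (δ' • a) • Z + (δ' • b) • Y := by
    rw [smul_add, smul_assoc, smul_assoc]
  obtain ⟨ha, hb⟩ := hZY.eq_of_pair (hexp.symm.trans (h.trans hrhs))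
  exact ⟨ha, by rw [sub_smul, ← hb, add_sub_cancel_right]⟩

end CommRing

lemma apply_zpow_eq_smul_of_apply_eq_smul {R K : Type*} [CommRing R] [Field K] [Algebra R K]
    {Z : Derivation R K K} {b : K} {ε : R} (hb : Z b = ε • b) (n : ℤ) :
    Z (b ^ n) = ((n : R) * ε) • b ^ n := by
  rcases eq_or_ne b 0 with rfl | hb0
  · rcases eq_or_ne n 0 with rfl | hn
    · simp
    · simp [zero_zpow n hn]
  rw [leibniz_zpow, hb, smul_comm (b ^ (n - 1)) ε b, smul_eq_mul, ← zpow_add_one₀ hb0,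
    sub_add_cancel, ← Int.cast_smul_eq_zsmul R, smul_smul]

end Derivation

theorem stmt10_general {K : Type*} [Field K] [Algebra ℂ K]
    (Z Y Yt : Derivation ℂ K K) (δ δt : ℂ) (a b : K) (hb : b ≠ 0)
    -- (δ, Y) and (δ̃, Ỹ) are transverse structures of Z :
    (hY : ⁅Z, Y⁆ = δ • Y) (hYt : ⁅Z, Yt⁆ = δt • Yt)
    (hZY : LinearIndependent K ![Z, Y])
    (hrep : Yt = a • Z + b • Y) :
    Z a = δt • a ∧
    Z b = (δt - δ) • b ∧
    (∀ n : ℤ, ⁅Z, (b ^ n) • Y⁆ = ((δ + (n : ℂ) * (δt - δ))) • ((b ^ n) • Y) ∧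
      LinearIndependent K ![Z, (b ^ n) • Y]) ∧
    -- in particular, Δ(Z) is stable under δ ↦ δ + n(δ̃ − δ) :
    (∀ n : ℤ, ∃ Y' : Derivation ℂ K K,
      LinearIndependent K ![Z, Y'] ∧ ⁅Z, Y'⁆ = (δ + (n : ℂ) * (δt - δ)) • Y') := by
  subst hrep
  obtain ⟨ha, hbZ⟩ := Derivation.apply_eq_smul_of_lie_add_eq_smul hZY hY hYt
  have hstruct (n : ℤ) : ⁅Z, (b ^ n) • Y⁆ = ((δ + (n : ℂ) * (δt - δ))) • ((b ^ n) • Y) ∧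
      LinearIndependent K ![Z, (b ^ n) • Y] :=
    ⟨Derivation.lie_smul_eq_smul_of_apply_eq_smul hY
        (Derivation.apply_zpow_eq_smul_of_apply_eq_smul hbZ n),
      by simpa using (LinearIndependent.pair_smul_smul_iff isUnit_one
        (zpow_ne_zero n hb).isUnit).mpr hZY⟩
  exact ⟨ha, hbZ, hstruct, fun n => ⟨_, (hstruct n).2, (hstruct n).1⟩⟩

theorem stmt10 {K : Type*} [Field K] [Algebra ℂ K]
    (Z Y Yt : Derivation ℂ K K) (δ δt : ℂ) (a b : K) (hb : b ≠ 0)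
    -- (δ, Y) and (δ̃, Ỹ) are transverse structures of Z :
    (hY : ⁅Z, Y⁆ = δ • Y) (hYt : ⁅Z, Yt⁆ = δt • Yt)
    (hZY : LinearIndependent K ![Z, Y])
    (hZYt : LinearIndependent K ![Z, Yt])
    (hrep : Yt = a • Z + b • Y) :
    Z a = δt • a ∧
    Z b = (δt - δ) • b ∧
    (∀ n : ℤ, ⁅Z, (b ^ n) • Y⁆ = ((δ + (n : ℂ) * (δt - δ))) • ((b ^ n) • Y) ∧
      LinearIndependent K ![Z, (b ^ n) • Y]) ∧
    -- in particular, Δ(Z) is stable under δ ↦ δ + n(δ̃ − δ) :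
    (∀ n : ℤ, ∃ Y' : Derivation ℂ K K,
      LinearIndependent K ![Z, Y'] ∧ ⁅Z, Y'⁆ = (δ + (n : ℂ) * (δt - δ)) • Y') :=
  stmt10_general Z Y Yt δ δt a b hb hY hYt hZY hrep
end

section
/- Let Z, Y be vector fields with [Z,Y] = DY where Y·D = 0, and let N be a (formal) function with N(0,0)=0. Set 𝒩 := Φ_Y^N (flow of Y for time N). Then 𝒩*Y = Y/(1 + Y·N) and 𝒩*Z = Z − (Z·N + DN)·𝒩*Y, i.e., 𝒩*Z = Z + RY with R = −(Z·N + DN)/(1 + Y·N). -/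
/-!
Write `φ` for the flow of `Y`. Differentiating `φ` in space and then in time, and exchanging
the two derivatives (possible by the Cauchy integral formula in the space direction), shows
that the transport `t ↦ dφ_(p,t) (v, 0)` of a vector `v` solves the variational equation
`w' = DY(φ(p,t)) w`. The curve `t ↦ Y(φ(p,t))` solves it too, and so does
`t ↦ Z(φ(p,t)) + t D(p) Y(φ(p,t))`, because `[Z,Y] = D Y` and `D` is constant along orbits
(`Y·D = 0`). By uniqueness for linear equations, `dφ_(p,t)` maps `Y(p)` to `Y(φ(p,t))` and
`Z(p)` to `Z(φ(p,t)) + t D(p) Y(φ(p,t))`, which is `Z·g = Z∘g + tD(Y∘g)` for `g = Φ_Y^t`.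
For `𝒩 = Φ_Y^N` the chain rule adds the time direction,
`d𝒩_p v = dφ_(p,N p) (v, 0) + (dN_p v) Y(𝒩 p)`, and both pullback formulas follow.
-/

noncomputable section

def lieDA (V : ℂ × ℂ → ℂ × ℂ) (f : ℂ × ℂ → ℂ) (p : ℂ × ℂ) : ℂ :=
  fderiv ℂ f p (V p)

def brkA (Z Y : ℂ × ℂ → ℂ × ℂ) (p : ℂ × ℂ) : ℂ × ℂ :=
  fderiv ℂ Y p (Z p) - fderiv ℂ Z p (Y p)

open Set Filter Function Metric Real

theorem hasDerivAt_intervalIntegral_of_continuous {𝕜 E : Type*} [RCLike 𝕜]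
    [NormedAddCommGroup E] [NormedSpace ℝ E] [NormedSpace 𝕜 E] {F F' : 𝕜 → ℝ → E} {a b : ℝ}
    (hF : ∀ x, Continuous (F x)) (hF' : Continuous (uncurry F'))
    (hderiv : ∀ x θ, HasDerivAt (F · θ) (F' x θ) x) (x₀ : 𝕜) :
    HasDerivAt (fun x => ∫ θ in a..b, F x θ) (∫ θ in a..b, F' x₀ θ) x₀ := by
  obtain ⟨M, hM⟩ := ((isCompact_closedBall x₀ 1).prod isCompact_uIcc).exists_bound_of_continuousOn
    hF'.continuousOn
  exact (intervalIntegral.hasDerivAt_integral_of_dominated_loc_of_deriv_le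
    (bound := fun _ => M) (closedBall_mem_nhds x₀ one_pos)
    (Eventually.of_forall fun x => (hF x).aestronglyMeasurable)
    ((hF x₀).intervalIntegrable _ _) (hF'.comp (Continuous.prodMk_right x₀)).aestronglyMeasurable
    (MeasureTheory.ae_of_all _ fun θ hθ x hx => hM (x, θ) ⟨hx, uIoc_subset_uIcc hθ⟩)
    intervalIntegrable_const (MeasureTheory.ae_of_all _ fun θ _ x _ => hderiv x θ)).2

def cauchyDerivKernel (θ : ℝ) : ℂ := (2 * π : ℂ)⁻¹ * (circleMap 0 1 θ)⁻¹

theorem continuous_cauchyDerivKernel : Continuous cauchyDerivKernel :=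
  continuous_const.mul <| (continuous_circleMap 0 1).inv₀ fun _ => circleMap_ne_center one_ne_zero

section Cauchy

variable {E : Type*} [NormedAddCommGroup E] [NormedSpace ℂ E] [CompleteSpace E]

theorem deriv_zero_eq_intervalIntegral_cauchyDerivKernel {f : ℂ → E} (hf : Differentiable ℂ f) :
    deriv f 0 = ∫ θ in 0..2 * π, cauchyDerivKernel θ • f (circleMap 0 1 θ) := by
  have h := hf.differentiableOn.deriv_eq_smul_circleIntegral (c := 0) one_pos
  rw [← inv_smul_eq_iff₀ Complex.two_pi_I_ne_zero] at h
  rw [← h, circleIntegral, ← intervalIntegral.integral_smul]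
  refine intervalIntegral.integral_congr fun θ _ => ?_
  have hz : circleMap 0 1 θ ≠ 0 := circleMap_ne_center one_ne_zero
  simp only [deriv_circleMap, sub_zero, smul_smul, cauchyDerivKernel]
  congr 1
  field_simp

/-- Mixed partials commute: the Cauchy formula writes `∂ₛ G (0, t)` as an integral over the unit
circle, which is then differentiated in `t` under the integral sign. -/
theorem hasDerivAt_of_partialDeriv_comm {G H : ℂ → ℂ → E} {g : ℂ → E} {h₀ : E} {t₀ : ℂ}
    (hG : ∀ t, Differentiable ℂ (G · t)) (hGH : ∀ s t, HasDerivAt (G s) (H s t) t)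
    (hH : Continuous (uncurry H)) (hH₀ : Differentiable ℂ (H · t₀))
    (hg : ∀ t, HasDerivAt (G · t) (g t) 0) (hh₀ : HasDerivAt (H · t₀) h₀ 0) :
    HasDerivAt g h₀ t₀ := by
  have hg_eq : g = fun t => ∫ θ in 0..2 * π, cauchyDerivKernel θ • G (circleMap 0 1 θ) t :=
    funext fun t =>
      (hg t).deriv.symm.trans (deriv_zero_eq_intervalIntegral_cauchyDerivKernel (hG t))
  rw [hg_eq, ← hh₀.deriv, deriv_zero_eq_intervalIntegral_cauchyDerivKernel hH₀]
  refine hasDerivAt_intervalIntegral_of_continuous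
    (fun t => continuous_cauchyDerivKernel.smul ((hG t).continuous.comp (continuous_circleMap 0 1)))
    ?_ (fun t θ => (hGH _ t).const_smul _) t₀
  exact (continuous_cauchyDerivKernel.comp continuous_snd).smul
    (hH.comp ((continuous_circleMap 0 1).comp continuous_snd |>.prodMk continuous_fst))

end Cauchy

/-- On each complex line `s ↦ x + s • v` the Cauchy formula makes `fderiv ℂ f x v` an integral
depending continuously on `x`. -/
theorem Differentiable.continuous_fderiv_of_finiteDimensional {E F : Type*}
    [NormedAddCommGroup E] [NormedSpace ℂ E] [FiniteDimensional ℂ E]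
    [NormedAddCommGroup F] [NormedSpace ℂ F] [CompleteSpace F] {f : E → F}
    (hf : Differentiable ℂ f) : Continuous (fderiv ℂ f) := by
  refine continuous_clm_apply.2 fun v => ?_
  have hline : ∀ x, Differentiable ℂ fun s : ℂ => f (x + s • v) := fun x =>
    hf.comp (by fun_prop)
  have hrep : (fderiv ℂ f · v) = fun x =>
      ∫ θ in 0..2 * π, cauchyDerivKernel θ • f (x + circleMap 0 1 θ • v) := funext fun x =>
    (HasDerivAt.deriv ((hf x).hasFDerivAt.hasLineDerivAt v)).symm.trans
      (deriv_zero_eq_intervalIntegral_cauchyDerivKernel (hline x))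
  rw [hrep]
  refine intervalIntegral.continuous_parametric_intervalIntegral_of_continuous' ?_ _ _
  exact (continuous_cauchyDerivKernel.comp continuous_snd).smul
    (hf.continuous.comp (continuous_fst.add (((continuous_circleMap 0 1).comp continuous_snd).smul
      continuous_const)))

/-- Grönwall uniqueness on the real segment `s ↦ s t`, where `A` is bounded by compactness. -/
theorem eq_of_hasDerivAt_clm_apply {E : Type*} [NormedAddCommGroup E] [NormedSpace ℂ E]
    {A : ℂ → E →L[ℂ] E} (hA : Continuous A) {w u : ℂ → E}
    (hw : ∀ t, HasDerivAt w (A t (w t)) t) (hu : ∀ t, HasDerivAt u (A t (u t)) t)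
    (h0 : w 0 = u 0) (t : ℂ) : w t = u t := by
  set v : ℝ → E →L[ℂ] E := fun s => t • A (s * t)
  have hline : ∀ s : ℝ, HasDerivAt (fun s : ℝ => (s : ℂ) * t) t s := fun s => by
    simpa using (hasDerivAt_id s).ofReal_comp.mul_const t
  have hray : ∀ {f : ℂ → E}, (∀ t, HasDerivAt f (A t (f t)) t) →
      ∀ s : ℝ, HasDerivAt (fun s : ℝ => f (s * t)) (v s (f (s * t))) s := fun hf s =>
    (hf _).scomp s (hline s)
  obtain ⟨K, hK⟩ := isCompact_Icc.exists_bound_of_continuousOn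
    (f := fun s : ℝ => v s) (by fun_prop)
  have hlip : ∀ s ∈ Ico (0 : ℝ) 1, LipschitzOnWith K.toNNReal (v s) univ := fun s hs => by
    have hvK : ‖v s‖₊ ≤ K.toNNReal :=
      norm_toNNReal (a := v s) ▸ Real.toNNReal_le_toNNReal (hK s (Ico_subset_Icc_self hs))
    exact ((v s).lipschitz.weaken hvK).lipschitzOnWith
  have := ODE_solution_unique_of_mem_Icc_right hlip
    (f := fun s : ℝ => w (s * t)) (g := fun s : ℝ => u (s * t))
    (fun s _ => (hray hw s).continuousAt.continuousWithinAt)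
    (fun s _ => (hray hw s).hasDerivWithinAt) (fun _ _ => mem_univ _)
    (fun s _ => (hray hu s).continuousAt.continuousWithinAt)
    (fun s _ => (hray hu s).hasDerivWithinAt) (fun _ _ => mem_univ _)
    (by simpa using h0) (right_mem_Icc.2 zero_le_one)
  simpa using this

section Flow

variable {E : Type*} [NormedAddCommGroup E] [NormedSpace ℂ E] {φ : E × ℂ → E} {Y : E → E}

theorem fderiv_flow_apply_time (hφ : Differentiable ℂ φ)
    (hflow : ∀ p t, HasDerivAt (fun s => φ (p, s)) (Y (φ (p, t))) t) (p : E) (t : ℂ) :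
    fderiv ℂ φ (p, t) (0, 1) = Y (φ (p, t)) :=
  ((hφ _).hasFDerivAt.comp_hasDerivAt t ((hasDerivAt_const t p).prodMk (hasDerivAt_id t))).unique
    (hflow p t)

theorem fderiv_flow_zero_apply (hφ : Differentiable ℂ φ) (hφ0 : ∀ p, φ (p, 0) = p) (p v : E) :
    fderiv ℂ φ (p, 0) (v, 0) = v := by
  have hline : HasDerivAt (fun s : ℂ => φ ((p, 0) + s • (v, 0))) v 0 := by
    simpa [hφ0] using ((hasDerivAt_id (0 : ℂ)).smul_const v).const_add p
  exact ((hφ _).hasFDerivAt.hasLineDerivAt (v, 0)).unique hline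

theorem apply_flow_eq_of_fderiv_apply_eq_zero {F : Type*} [NormedAddCommGroup F]
    [NormedSpace ℂ F] {f : E → F} (hf : Differentiable ℂ f) (hφ0 : ∀ p, φ (p, 0) = p)
    (hflow : ∀ p t, HasDerivAt (fun s => φ (p, s)) (Y (φ (p, t))) t)
    (hYf : ∀ x, fderiv ℂ f x (Y x) = 0) (p : E) (t : ℂ) : f (φ (p, t)) = f p := by
  have hderiv : ∀ t, HasDerivAt (fun t => f (φ (p, t))) 0 t := fun t => by
    simpa [Function.comp_def, hYf] using (hf _).hasFDerivAt.comp_hasDerivAt t (hflow p t)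
  simpa [hφ0] using
    is_const_of_deriv_eq_zero (fun t => (hderiv t).differentiableAt) (fun t => (hderiv t).deriv) t 0

theorem fderiv_flow_variableTime_eq (hφ : Differentiable ℂ φ)
    (hflow : ∀ p t, HasDerivAt (fun s => φ (p, s)) (Y (φ (p, t))) t) {N : E → ℂ}
    (hN : Differentiable ℂ N) (p : E) :
    fderiv ℂ (fun q => φ (q, N q)) p =
      (fderiv ℂ φ (p, N p)).comp (.inl ℂ E ℂ) + (fderiv ℂ N p).smulRight (Y (φ (p, N p))) := by
  have hcomp : HasFDerivAt (fun q => φ (q, N q)) _ p :=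
    (hφ _).hasFDerivAt.comp p ((hasFDerivAt_id p).prodMk (hN p).hasFDerivAt)
  rw [hcomp.fderiv]
  ext x
  have hsplit : (x, fderiv ℂ N p x) = (x, 0) + fderiv ℂ N p x • ((0 : E), (1 : ℂ)) := by simp
  change fderiv ℂ φ (p, N p) (x, fderiv ℂ N p x) =
    fderiv ℂ φ (p, N p) (x, 0) + fderiv ℂ N p x • Y (φ (p, N p))
  rw [hsplit, map_add, map_smul, fderiv_flow_apply_time hφ hflow]

theorem hasDerivAt_fderiv_flow_apply [CompleteSpace E] (hφ : Differentiable ℂ φ)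
    (hY : Differentiable ℂ Y) (hflow : ∀ p t, HasDerivAt (fun s => φ (p, s)) (Y (φ (p, t))) t)
    (p v : E) (t : ℂ) :
    HasDerivAt (fun t => fderiv ℂ φ (p, t) (v, 0))
      (fderiv ℂ Y (φ (p, t)) (fderiv ℂ φ (p, t) (v, 0))) t := by
  have hG : ∀ t, Differentiable ℂ fun s : ℂ => φ ((p, t) + s • (v, 0)) := fun t =>
    hφ.comp (by fun_prop)
  refine hasDerivAt_of_partialDeriv_comm (H := fun s t => Y (φ ((p, t) + s • (v, 0)))) hG
    (fun s t => ?_) (hY.continuous.comp (hφ.continuous.comp (by fun_prop))) (hY.comp (hG t))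
    (fun t => (hφ _).hasFDerivAt.hasLineDerivAt (v, 0)) ?_
  · simpa using hflow (p + s • v) t
  · simpa [Function.comp_def] using
      (hY _).hasFDerivAt.comp_hasDerivAt (0 : ℂ) ((hφ (p, t)).hasFDerivAt.hasLineDerivAt (v, 0))

variable [FiniteDimensional ℂ E]

theorem fderiv_flow_apply_eq_of_hasDerivAt (hφ : Differentiable ℂ φ) (hY : Differentiable ℂ Y)
    (hφ0 : ∀ p, φ (p, 0) = p) (hflow : ∀ p t, HasDerivAt (fun s => φ (p, s)) (Y (φ (p, t))) t)
    {p v : E} {u : ℂ → E} (hu : ∀ t, HasDerivAt u (fderiv ℂ Y (φ (p, t)) (u t)) t)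
    (hu0 : u 0 = v) (t : ℂ) : fderiv ℂ φ (p, t) (v, 0) = u t :=
  eq_of_hasDerivAt_clm_apply (A := fun t => fderiv ℂ Y (φ (p, t)))
    (hY.continuous_fderiv_of_finiteDimensional.comp (hφ.continuous.comp (by fun_prop)))
    (hasDerivAt_fderiv_flow_apply hφ hY hflow p v) hu
    (by rw [fderiv_flow_zero_apply hφ hφ0, hu0]) t

theorem fderiv_flow_apply_self (hφ : Differentiable ℂ φ) (hY : Differentiable ℂ Y)
    (hφ0 : ∀ p, φ (p, 0) = p) (hflow : ∀ p t, HasDerivAt (fun s => φ (p, s)) (Y (φ (p, t))) t)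
    (p : E) (t : ℂ) : fderiv ℂ φ (p, t) (Y p, 0) = Y (φ (p, t)) :=
  fderiv_flow_apply_eq_of_hasDerivAt hφ hY hφ0 hflow
    (fun t => (hY _).hasFDerivAt.comp_hasDerivAt t (hflow p t)) (by simp [hφ0]) t

theorem fderiv_flow_apply_of_lieBracket_eq_smul {Z : E → E} {D : E → ℂ}
    (hφ : Differentiable ℂ φ) (hY : Differentiable ℂ Y) (hZ : Differentiable ℂ Z)
    (hD : Differentiable ℂ D) (hφ0 : ∀ p, φ (p, 0) = p)
    (hflow : ∀ p t, HasDerivAt (fun s => φ (p, s)) (Y (φ (p, t))) t)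
    (hbrk : ∀ x, VectorField.lieBracket ℂ Z Y x = D x • Y x) (hYD : ∀ x, fderiv ℂ D x (Y x) = 0)
    (p : E) (t : ℂ) :
    fderiv ℂ φ (p, t) (Z p, 0) = Z (φ (p, t)) + (t * D p) • Y (φ (p, t)) := by
  refine fderiv_flow_apply_eq_of_hasDerivAt hφ hY hφ0 hflow
    (u := fun t => Z (φ (p, t)) + (t * D p) • Y (φ (p, t))) (fun t => ?_) (by simp [hφ0]) t
  have hYφ := (hY _).hasFDerivAt.comp_hasDerivAt t (hflow p t)
  have hZφ := (hZ _).hasFDerivAt.comp_hasDerivAt t (hflow p t)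
  refine (hZφ.add ((hasDerivAt_mul_const (D p)).smul hYφ)).congr_deriv ?_
  rw [map_add, map_smul, sub_eq_iff_eq_add.mp (hbrk _),
    apply_flow_eq_of_fderiv_apply_eq_zero hD hφ0 hflow hYD]
  abel

end Flow

theorem stmt16_general (Z Y : ℂ × ℂ → ℂ × ℂ) (D N : ℂ × ℂ → ℂ)
    (φ : (ℂ × ℂ) × ℂ → ℂ × ℂ)
    (hZ : Differentiable ℂ Z) (hY : Differentiable ℂ Y)
    (hD : Differentiable ℂ D) (hN : Differentiable ℂ N)
    (hφ : Differentiable ℂ φ)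
    -- φ is the flow of Y :
    (hφ0 : ∀ p, φ (p, 0) = p)
    (hflow : ∀ p t, HasDerivAt (fun s => φ (p, s)) (Y (φ (p, t))) t)
    -- [Z,Y] = D·Y and Y·D = 0 :
    (hbrk : ∀ p, brkA Z Y p = D p • Y p)
    (hYD : ∀ p, lieDA Y D p = 0)
    (p : ℂ × ℂ) (hp : 1 + lieDA Y N p ≠ 0) :
    -- 𝒩*Y = Y/(1+Y·N) :
    fderiv ℂ (fun q => φ (q, N q)) p ((1 + lieDA Y N p)⁻¹ • Y p)
      = Y (φ (p, N p)) ∧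
    -- 𝒩*Z = Z + R·Y with R = −(Z·N + D·N)/(1+Y·N) :
    fderiv ℂ (fun q => φ (q, N q)) p
        (Z p + (-(lieDA Z N p + D p * N p) / (1 + lieDA Y N p)) • Y p)
      = Z (φ (p, N p)) := by
  have hYN := fderiv_flow_apply_self hφ hY hφ0 hflow p (N p)
  have hZN := fderiv_flow_apply_of_lieBracket_eq_smul hφ hY hZ hD hφ0 hflow hbrk hYD p (N p)
  rw [fderiv_flow_variableTime_eq hφ hflow hN]
  unfold lieDA at hp ⊢
  simp only [add_apply, map_add, map_smul, ContinuousLinearMap.comp_apply,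
    ContinuousLinearMap.inl_apply, ContinuousLinearMap.smulRight_apply, hYN, hZN]
  constructor
  · match_scalars
    field_simp
  · match_scalars
    · rfl
    · field_simp
      ring

theorem stmt16 (Z Y : ℂ × ℂ → ℂ × ℂ) (D N : ℂ × ℂ → ℂ)
    (φ : (ℂ × ℂ) × ℂ → ℂ × ℂ)
    (hZ : Differentiable ℂ Z) (hY : Differentiable ℂ Y)
    (hD : Differentiable ℂ D) (hN : Differentiable ℂ N)
    (hφ : Differentiable ℂ φ)
    -- φ is the flow of Y :
    (hφ0 : ∀ p, φ (p, 0) = p)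
    (hflow : ∀ p t, HasDerivAt (fun s => φ (p, s)) (Y (φ (p, t))) t)
    -- [Z,Y] = D·Y and Y·D = 0 :
    (hbrk : ∀ p, brkA Z Y p = D p • Y p)
    (hYD : ∀ p, lieDA Y D p = 0)
    (hN0 : N 0 = 0)
    (p : ℂ × ℂ) (hp : 1 + lieDA Y N p ≠ 0) :
    -- 𝒩*Y = Y/(1+Y·N) :
    fderiv ℂ (fun q => φ (q, N q)) p ((1 + lieDA Y N p)⁻¹ • Y p)
      = Y (φ (p, N p)) ∧
    -- 𝒩*Z = Z + R·Y with R = −(Z·N + D·N)/(1+Y·N) :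
    fderiv ℂ (fun q => φ (q, N q)) p
        (Z p + (-(lieDA Z N p + D p * N p) / (1 + lieDA Y N p)) • Y p)
      = Z (φ (p, N p)) :=
  stmt16_general Z Y D N φ hZ hY hD hN hφ hφ0 hflow hbrk hYD p hp
end
end

section
/- Let Z, Y be vector fields with [Z,Y] = δY, δ ∈ ℂ constant, and Z ⋔ Y, and let T be a (formal) function with T(0,0)=0 and (Z·T)(0,0) ≠ −1. Set 𝒯 := Φ_Z^T. Then 𝒯*Z = Z/(1 + Z·T) and 𝒯*Y = e^{δT}(Y − (Y·T)·𝒯*Z). -/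
/-!
The linearized flow `t ↦ Dψ(x,t)(u,0)` solves the variational equation `W' = DZ(ψ(x,t)) W`.
So does `t ↦ Z(ψ(x,t))`, and so does `t ↦ e^{-δt} Y(ψ(x,t))` because `[Z,Y] = δY`; by uniqueness
`Dψ_t Z = Z ∘ ψ_t` and `Dψ_t Y = e^{-δt} Y ∘ ψ_t`. The chain rule for `q ↦ ψ(q, T q)` adds the
term `(DT·w) Z ∘ 𝒯`, and both identities follow by linear algebra.

Only complex differentiability is assumed, so `∂_t` is commuted with the directional derivative
through the Cauchy integral formula in the direction variable, and local bounds on `DZ` come from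
Cauchy estimates.
-/

/- The flow of Z is abstracted as a map ψ with ∂ψ/∂t(p,t) = Z(ψ(p,t)), ψ(p,0) = p; the
pullback identity 𝒯*V = V' is expressed by (d𝒯)_p(V' p) = V(𝒯(p)). -/

noncomputable section

open Complex Metric Set Real Function

section

variable {E F : Type*} [NormedAddCommGroup E] [NormedSpace ℂ E] [NormedAddCommGroup F]
  [NormedSpace ℂ F] {Z : E → E} {ψ : E × ℂ → E}

theorem DifferentiableAt.hasDerivAt_comp_add_smul {f : E → F} {q : E}
    (hf : DifferentiableAt ℂ f q) (v : E) :
    HasDerivAt (fun z : ℂ => f (q + z • v)) (fderiv ℂ f q v) 0 := by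
  have h := ((hasDerivAt_id (0 : ℂ)).smul_const v).const_add q
  simp only [id, one_smul] at h
  exact hf.hasFDerivAt.comp_hasDerivAt_of_eq 0 h (by simp)

theorem IsCompact.exists_bound_norm_fderiv [ProperSpace E] {f : E → F}
    (hf : Differentiable ℂ f) {C : Set E} (hC : IsCompact C) :
    ∃ M, ∀ q ∈ C, ‖fderiv ℂ f q‖ ≤ M := by
  obtain ⟨M, hM⟩ := (hC.cthickening (r := 1)).exists_bound_of_continuousOn
    hf.continuous.continuousOn
  refine ⟨max M 0, fun q hq => ContinuousLinearMap.opNorm_le_of_unit_norm (le_max_right _ _)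
    fun v hv => ?_⟩
  rw [← ((hf q).hasDerivAt_comp_add_smul v).deriv, ← div_one (max M 0)]
  refine Complex.norm_deriv_le_of_forall_mem_sphere_norm_le one_pos
    (hf.comp (by fun_prop)).diffContOnCl
    fun z hz => (hM _ ?_).trans (le_max_left _ _)
  refine mem_cthickening_of_dist_le _ q _ _ hq ?_
  simp_all [dist_eq_norm, norm_smul]

theorem eq_of_hasDerivAt_clm_apply_s17 {A : ℂ → E →L[ℂ] E}
    (hA : ∀ K, IsCompact K → ∃ M, ∀ t ∈ K, ‖A t‖ ≤ M) {W V : ℂ → E}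
    (hW : ∀ t, HasDerivAt W (A t (W t)) t) (hV : ∀ t, HasDerivAt V (A t (V t)) t)
    (h0 : W 0 = V 0) (t : ℂ) : W t = V t := by
  -- real ODE uniqueness on the segment `s ↦ s t`, `s ∈ [0, 1]`
  set ray : ℝ → ℂ := fun s => s * t
  have hray : ∀ s, HasDerivAt ray t s := fun s => by
    simpa using (ofRealCLM.hasDerivAt (x := s)).mul_const t
  obtain ⟨M, hM⟩ := hA _ ((isCompact_Icc (a := (0:ℝ)) (b := 1)).image
    (continuous_ofReal.mul continuous_const))
  have hlip : ∀ s ∈ Ico (0:ℝ) 1, LipschitzOnWith (‖t‖ * M).toNNReal (t • A (ray s)) univ :=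
    fun s hs => by
      refine (ContinuousLinearMap.lipschitz _).weaken ?_ |>.lipschitzOnWith
      rw [← NNReal.coe_le_coe, coe_nnnorm, Real.coe_toNNReal', norm_smul]
      exact le_max_of_le_left <| mul_le_mul_of_nonneg_left
        (hM _ ⟨s, Ico_subset_Icc_self hs, rfl⟩) (norm_nonneg t)
  have hsol : ∀ X : ℂ → E, (∀ t, HasDerivAt X (A t (X t)) t) →
      ∀ s, HasDerivAt (X ∘ ray) ((t • A (ray s)) ((X ∘ ray) s)) s := fun X hX s =>
    (hX (ray s)).scomp s (hray s)
  have := ODE_solution_unique_of_mem_Icc_right hlip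
    (fun s _ => (hsol W hW s).continuousAt.continuousWithinAt)
    (fun s _ => (hsol W hW s).hasDerivWithinAt) (fun _ _ => mem_univ _)
    (fun s _ => (hsol V hV s).continuousAt.continuousWithinAt)
    (fun s _ => (hsol V hV s).hasDerivWithinAt) (fun _ _ => mem_univ _)
    (by simpa [ray] using h0) (right_mem_Icc.2 zero_le_one)
  simpa [ray] using this

theorem hasDerivAt_circleIntegral_of_hasDerivAt {f g : ℂ → ℂ → E} {c : ℂ} {R : ℝ}
    (hf : ∀ s, ContinuousOn (fun z => f z s) (sphere c |R|))
    (hg : ContinuousOn (uncurry g) (sphere c |R| ×ˢ univ))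
    (hfg : ∀ z ∈ sphere c |R|, ∀ s, HasDerivAt (f z) (g z s) s) (s₀ : ℂ) :
    HasDerivAt (fun s => ∮ z in C(c, R), f z s) (∮ z in C(c, R), g z s₀) s₀ := by
  have hg₀ : ContinuousOn (fun z => g z s₀) (sphere c |R|) :=
    hg.comp (continuousOn_id.prodMk continuousOn_const) fun z hz => ⟨hz, mem_univ _⟩
  obtain ⟨C, hC⟩ := ((isCompact_sphere c |R|).prod (isCompact_closedBall s₀ 1)
    ).exists_bound_of_continuousOn (hg.mono (prod_mono subset_rfl (subset_univ _)))
  have hint := fun s => intervalIntegrable_iff.1 (hf s).circleIntegrable'.out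
  refine (intervalIntegral.hasDerivAt_integral_of_dominated_loc_of_deriv_le
    (F' := fun s θ => deriv (circleMap c R) θ • g (circleMap c R θ) s)
    (bound := fun _ => |R| * C) (ball_mem_nhds s₀ one_pos)
    (.of_forall fun s => (hint s).aestronglyMeasurable) (hf s₀).circleIntegrable'.out
    (intervalIntegrable_iff.1 hg₀.circleIntegrable'.out).aestronglyMeasurable
    (.of_forall fun θ _ s hs => ?_) intervalIntegrable_const
    (.of_forall fun θ _ s _ => ?_)).2
  · rw [norm_smul, deriv_circleMap, norm_mul, norm_circleMap_zero, norm_I, mul_one]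
    exact mul_le_mul_of_nonneg_left (hC (_, s) ⟨circleMap_mem_sphere' c R θ,
      ball_subset_closedBall hs⟩) (abs_nonneg R)
  · exact (hfg _ (circleMap_mem_sphere' c R θ) s).const_smul _

theorem hasDerivAt_deriv_comm [CompleteSpace E] {f g : ℂ → ℂ → E}
    (hf : ∀ s, Differentiable ℂ (fun z => f z s))
    (hg : Continuous (uncurry g)) (hfg : ∀ z s, HasDerivAt (f z) (g z s) s) (z₀ s₀ : ℂ)
    (hg₀ : Differentiable ℂ (fun z => g z s₀)) :
    HasDerivAt (fun s => deriv (fun z => f z s) z₀) (deriv (fun z => g z s₀) z₀) s₀ := by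
  have cauchy : ∀ h : ℂ → E, Differentiable ℂ h →
      deriv h z₀ = (2 * π * I)⁻¹ • ∮ z in C(z₀, 1), (1 / (z - z₀) ^ 2) • h z := fun h hh => by
    rw [hh.diffContOnCl.deriv_eq_smul_circleIntegral one_pos, inv_smul_smul₀]
    simp [pi_ne_zero, I_ne_zero]
  have hk : ContinuousOn (fun z : ℂ => 1 / (z - z₀) ^ 2) (sphere z₀ |1|) :=
    continuousOn_const.div (by fun_prop) fun z hz => by
      simpa [sub_eq_zero] using ne_of_mem_sphere hz (by norm_num)
  simp_rw [cauchy _ (hf _), cauchy _ hg₀]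
  refine (hasDerivAt_circleIntegral_of_hasDerivAt (fun s => hk.smul (hf s).continuous.continuousOn)
    ?_ (fun z _ s => (hfg z s).const_smul _) s₀).const_smul _
  exact (hk.comp continuousOn_fst fun _ h => h.1).smul hg.continuousOn

theorem fderiv_flow_apply_inr {x : E} {t : ℂ} (hψ : DifferentiableAt ℂ ψ (x, t))
    (hflow : HasDerivAt (fun s => ψ (x, s)) (Z (ψ (x, t))) t) :
    fderiv ℂ ψ (x, t) (0, 1) = Z (ψ (x, t)) :=
  (hψ.hasFDerivAt.comp_hasDerivAt t ((hasDerivAt_const t x).prodMk (hasDerivAt_id t))).unique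
    hflow

theorem hasDerivAt_comp_add_smul_fst {x u : E} {t : ℂ} (hψ : DifferentiableAt ℂ ψ (x, t)) :
    HasDerivAt (fun z : ℂ => ψ (x + z • u, t)) (fderiv ℂ ψ (x, t) (u, 0)) 0 := by
  simpa using hψ.hasDerivAt_comp_add_smul (u, 0)

theorem fderiv_flow_zero_apply_s17 (hψ : Differentiable ℂ ψ) (hψ0 : ∀ x, ψ (x, 0) = x) (x u : E) :
    fderiv ℂ ψ (x, 0) (u, 0) = u := by
  refine (hasDerivAt_comp_add_smul_fst (hψ _)).unique ?_
  simp only [hψ0]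
  simpa using ((hasDerivAt_id (0 : ℂ)).smul_const u).const_add x

theorem hasDerivAt_fderiv_flow_apply_s17 [CompleteSpace E] (hZ : Differentiable ℂ Z)
    (hψ : Differentiable ℂ ψ) (hflow : ∀ x t, HasDerivAt (fun s => ψ (x, s)) (Z (ψ (x, t))) t)
    (x u : E) (t : ℂ) :
    HasDerivAt (fun s => fderiv ℂ ψ (x, s) (u, 0))
      (fderiv ℂ Z (ψ (x, t)) (fderiv ℂ ψ (x, t) (u, 0))) t := by
  have hline : ∀ s, Differentiable ℂ (fun z : ℂ => ψ (x + z • u, s)) := fun s =>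
    hψ.comp (by fun_prop)
  have h := hasDerivAt_deriv_comm hline (g := fun z s => Z (ψ (x + z • u, s)))
    (hZ.continuous.comp (hψ.continuous.comp
      (by fun_prop : Continuous fun q : ℂ × ℂ => (x + q.1 • u, q.2))))
    (fun z s => hflow _ s) 0 t (hZ.comp (hline t))
  simp only [fun s => (hasDerivAt_comp_add_smul_fst (u := u) (hψ (x, s))).deriv] at h
  exact h.congr_deriv ((hZ _).hasFDerivAt.comp_hasDerivAt_of_eq 0
    (hasDerivAt_comp_add_smul_fst (hψ _)) (by simp)).deriv

theorem fderiv_flow_apply_eq_of_hasDerivAt_s17 [ProperSpace E] (hZ : Differentiable ℂ Z)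
    (hψ : Differentiable ℂ ψ) (hψ0 : ∀ x, ψ (x, 0) = x)
    (hflow : ∀ x t, HasDerivAt (fun s => ψ (x, s)) (Z (ψ (x, t))) t) {x u : E} {V : ℂ → E}
    (hV : ∀ t, HasDerivAt V (fderiv ℂ Z (ψ (x, t)) (V t)) t) (hV0 : V 0 = u) (t : ℂ) :
    fderiv ℂ ψ (x, t) (u, 0) = V t := by
  have hA : ∀ K, IsCompact K → ∃ M, ∀ t ∈ K, ‖fderiv ℂ Z (ψ (x, t))‖ ≤ M := fun K hK => by
    obtain ⟨M, hM⟩ := (hK.image (hψ.continuous.comp (.prodMk_right x))).exists_bound_norm_fderiv hZ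
    exact ⟨M, fun t ht => hM _ ⟨t, ht, rfl⟩⟩
  exact eq_of_hasDerivAt_clm_apply_s17 hA (hasDerivAt_fderiv_flow_apply_s17 hZ hψ hflow x u) hV
    (by rw [fderiv_flow_zero_apply_s17 hψ hψ0, hV0]) t

theorem fderiv_flow_apply_self_s17 [ProperSpace E] (hZ : Differentiable ℂ Z)
    (hψ : Differentiable ℂ ψ) (hψ0 : ∀ x, ψ (x, 0) = x)
    (hflow : ∀ x t, HasDerivAt (fun s => ψ (x, s)) (Z (ψ (x, t))) t) (x : E) (t : ℂ) :
    fderiv ℂ ψ (x, t) (Z x, 0) = Z (ψ (x, t)) :=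
  fderiv_flow_apply_eq_of_hasDerivAt_s17 hZ hψ hψ0 hflow
    (fun t => (hZ _).hasFDerivAt.comp_hasDerivAt t (hflow x t)) (congrArg Z (hψ0 x)) t

theorem fderiv_flow_apply_of_lieBracket_eq_smul_s17 [ProperSpace E] {Y : E → E} {δ : ℂ}
    (hZ : Differentiable ℂ Z) (hY : Differentiable ℂ Y) (hψ : Differentiable ℂ ψ)
    (hψ0 : ∀ x, ψ (x, 0) = x) (hflow : ∀ x t, HasDerivAt (fun s => ψ (x, s)) (Z (ψ (x, t))) t)
    (hbrk : ∀ y, fderiv ℂ Y y (Z y) - fderiv ℂ Z y (Y y) = δ • Y y) (x : E) (t : ℂ) :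
    fderiv ℂ ψ (x, t) (Y x, 0) = exp (-(δ * t)) • Y (ψ (x, t)) := by
  refine fderiv_flow_apply_eq_of_hasDerivAt_s17 hZ hψ hψ0 hflow
    (V := fun t => exp (-(δ * t)) • Y (ψ (x, t))) (fun t => ?_) (by simp [hψ0]) t
  have hexp : HasDerivAt (fun t => exp (-(δ * t))) (-δ * exp (-(δ * t))) t := by
    simpa [mul_comm] using ((hasDerivAt_id t).const_mul δ).neg.cexp
  have hYψ : HasDerivAt (fun t => Y (ψ (x, t))) _ t :=
    (hY _).hasFDerivAt.comp_hasDerivAt t (hflow x t)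
  refine (hexp.smul hYψ).congr_deriv ?_
  rw [map_smul]
  linear_combination (norm := module) exp (-(δ * t)) • hbrk (ψ (x, t))

theorem fderiv_comp_flow_apply {T : E → ℂ} {p : E} (hψ : DifferentiableAt ℂ ψ (p, T p))
    (hT : DifferentiableAt ℂ T p)
    (hflow : HasDerivAt (fun s => ψ (p, s)) (Z (ψ (p, T p))) (T p)) (w : E) :
    fderiv ℂ (fun q => ψ (q, T q)) p w
      = fderiv ℂ ψ (p, T p) (w, 0) + fderiv ℂ T p w • Z (ψ (p, T p)) := by
  have h : HasFDerivAt (fun q => ψ (q, T q)) _ p :=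
    hψ.hasFDerivAt.comp p ((hasFDerivAt_id p).prodMk hT.hasFDerivAt)
  rw [h.fderiv, ← fderiv_flow_apply_inr hψ hflow, ← map_smul, ← map_add]
  simp

end

theorem stmt17_general (Z Y : ℂ × ℂ → ℂ × ℂ) (T : ℂ × ℂ → ℂ) (δ : ℂ)
    (ψ : (ℂ × ℂ) × ℂ → ℂ × ℂ)
    (hZ : Differentiable ℂ Z) (hY : Differentiable ℂ Y) (hT : Differentiable ℂ T)
    (hψ : Differentiable ℂ ψ)
    -- ψ is the flow of Z :
    (hψ0 : ∀ p, ψ (p, 0) = p)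
    (hflow : ∀ p t, HasDerivAt (fun s => ψ (p, s)) (Z (ψ (p, t))) t)
    -- [Z,Y] = δ·Y :
    (hbrk : ∀ p, brkA Z Y p = δ • Y p)
    (p : ℂ × ℂ) (hp : 1 + lieDA Z T p ≠ 0) :
    -- 𝒯*Z = Z/(1+Z·T) :
    fderiv ℂ (fun q => ψ (q, T q)) p ((1 + lieDA Z T p)⁻¹ • Z p)
      = Z (ψ (p, T p)) ∧
    -- 𝒯*Y = e^{δT}(Y − (Y·T)·𝒯*Z) :
    fderiv ℂ (fun q => ψ (q, T q)) p
        (Complex.exp (δ * T p) •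
          (Y p - lieDA Y T p • ((1 + lieDA Z T p)⁻¹ • Z p)))
      = Y (ψ (p, T p)) := by
  have hchain := fderiv_comp_flow_apply (hψ _) (hT p) (hflow p (T p))
  have hpushZ : fderiv ℂ (fun q => ψ (q, T q)) p (Z p) = (1 + lieDA Z T p) • Z (ψ (p, T p)) := by
    rw [hchain, fderiv_flow_apply_self_s17 hZ hψ hψ0 hflow, lieDA, add_smul, one_smul]
  have hpushY : fderiv ℂ (fun q => ψ (q, T q)) p (Y p)
      = exp (-(δ * T p)) • Y (ψ (p, T p)) + lieDA Y T p • Z (ψ (p, T p)) := by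
    rw [hchain, fderiv_flow_apply_of_lieBracket_eq_smul_s17 hZ hY hψ hψ0 hflow hbrk, lieDA]
  refine ⟨by rw [map_smul, hpushZ, inv_smul_smul₀ hp], ?_⟩
  rw [map_smul, map_sub, map_smul, map_smul, hpushZ, inv_smul_smul₀ hp, hpushY,
    add_sub_cancel_right, smul_smul, ← Complex.exp_add, add_neg_cancel, Complex.exp_zero, one_smul]

theorem stmt17 (Z Y : ℂ × ℂ → ℂ × ℂ) (T : ℂ × ℂ → ℂ) (δ : ℂ)
    (ψ : (ℂ × ℂ) × ℂ → ℂ × ℂ)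
    (hZ : Differentiable ℂ Z) (hY : Differentiable ℂ Y) (hT : Differentiable ℂ T)
    (hψ : Differentiable ℂ ψ)
    -- ψ is the flow of Z :
    (hψ0 : ∀ p, ψ (p, 0) = p)
    (hflow : ∀ p t, HasDerivAt (fun s => ψ (p, s)) (Z (ψ (p, t))) t)
    -- [Z,Y] = δ·Y :
    (hbrk : ∀ p, brkA Z Y p = δ • Y p)
    (hT0 : T 0 = 0) (hT1 : lieDA Z T 0 ≠ -1)
    (p : ℂ × ℂ) (hp : 1 + lieDA Z T p ≠ 0)
    -- Z ⋔ Y at p :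
    (htr : (Z p).1 * (Y p).2 - (Z p).2 * (Y p).1 ≠ 0) :
    -- 𝒯*Z = Z/(1+Z·T) :
    fderiv ℂ (fun q => ψ (q, T q)) p ((1 + lieDA Z T p)⁻¹ • Z p)
      = Z (ψ (p, T p)) ∧
    -- 𝒯*Y = e^{δT}(Y − (Y·T)·𝒯*Z) :
    fderiv ℂ (fun q => ψ (q, T q)) p
        (Complex.exp (δ * T p) •
          (Y p - lieDA Y T p • ((1 + lieDA Z T p)⁻¹ • Z p)))
      = Y (ψ (p, T p)) :=
  stmt17_general Z Y T δ ψ hZ hY hT hψ hψ0 hflow hbrk p hp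
end
end

section
/- Let Z be a germ of a holomorphic vector field at the origin of ℂ² with zero linear part (Z vanishes to order ≥ 2), and let Y be a meromorphic vector field with [Z,Y] = δY. Then δ = 0. -/
/-!
Compare orders (lowest total degrees) of both sides of `𝔭 · [Z, W] = (δ𝔭 + Z·𝔭) · W`, taking the
component `W i` of least order `m`, with `n` the order of `𝔭`. Since `Z` vanishes to order two,
differentiating along `Z` raises the order by at least one, and so does bracketing with `Z`;
hence the left side has order `≥ n + m + 1`. If `δ ≠ 0`, the factor `δ𝔭 + Z·𝔭` has order exactly
`n`, and since `ℂ[[x, y]]` is a domain the right side has order exactly `n + m`.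
-/

noncomputable section
open MvPowerSeries

theorem Finsupp.exists_eq_single_of_degree_eq_one {σ : Type*} {d : σ →₀ ℕ}
    (h : d.degree = 1) : ∃ j, d = Finsupp.single j 1 := by
  classical
  obtain ⟨j, hj⟩ : ∃ j, Finsupp.toMultiset d = {j} := by
    rw [← Multiset.card_eq_one, Finsupp.card_toMultiset]; exact h
  exact ⟨j, by rw [← Finsupp.toMultiset_toFinsupp d, hj, Multiset.toFinsupp_singleton]⟩

theorem MvPowerSeries.two_le_order {σ R : Type*} [Semiring R] {f : MvPowerSeries σ R}
    (h0 : constantCoeff f = 0) (h1 : ∀ j, coeff (Finsupp.single j 1) f = 0) : 2 ≤ f.order := by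
  refine nat_le_order fun d hd => ?_
  obtain hd0 | hd1 : d.degree = 0 ∨ d.degree = 1 := by norm_cast at hd; omega
  · rw [(Finsupp.degree_eq_zero_iff d).mp hd0, coeff_zero_eq_constantCoeff_apply, h0]
  · obtain ⟨j, rfl⟩ := Finsupp.exists_eq_single_of_degree_eq_one hd1
    exact h1 j

theorem order_le_order_pd_add_one (j : Fin 2) (f : R2) : f.order ≤ (pd j f).order + 1 := by
  by_cases htop : (pd j f).order = ⊤
  · simp [htop]
  obtain ⟨d, hd, hdeg⟩ := exists_coeff_ne_zero_and_order (ne_zero_iff_order_finite.mp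
    (fun h : pd j f = 0 => htop (by rw [h, order_zero])))
  have hcoeff : coeff (d + Finsupp.single j 1) f ≠ 0 := fun h => hd (by
    rw [coeff_apply]; simp [pd, h])
  calc f.order ≤ (d + Finsupp.single j 1).degree := order_le hcoeff
    _ = (pd j f).order + 1 := by simp [hdeg]

theorem le_order_lieD_add_one {V : Fin 2 → R2} {a : ℕ∞} (hV : ∀ j, a ≤ (V j).order) (f : R2) :
    a + f.order ≤ (lieD V f).order + 1 := by
  have hterm : ∀ j, a + f.order ≤ (V j * pd j f).order + 1 := fun j =>
    calc a + f.order ≤ (V j).order + ((pd j f).order + 1) :=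
          add_le_add (hV j) (order_le_order_pd_add_one j f)
      _ ≤ (V j * pd j f).order + 1 := by rw [← add_assoc]; gcongr; exact le_order_mul
  calc a + f.order ≤ min (V 0 * pd 0 f).order (V 1 * pd 1 f).order + 1 := by
        rw [← min_add_add_right]; exact le_min (hterm 0) (hterm 1)
    _ ≤ (lieD V f).order + 1 := by gcongr; exact min_order_le_add

theorem order_add_one_le_order_lieD {Z : Fin 2 → R2} (hZ : ∀ j, 2 ≤ (Z j).order) (f : R2) :
    f.order + 1 ≤ (lieD Z f).order := by
  refine (ENat.add_le_add_iff_right ENat.one_ne_top).mp ?_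
  calc f.order + 1 + 1 = 2 + f.order := by ring
    _ ≤ _ := le_order_lieD_add_one hZ f

theorem le_order_brk {Z W : Fin 2 → R2} {m : ℕ∞} (hZ : ∀ j, 2 ≤ (Z j).order)
    (hW : ∀ j, m ≤ (W j).order) (i : Fin 2) : m + 1 ≤ (brk Z W i).order := by
  have hZW : m + 1 ≤ (lieD Z (W i)).order :=
    le_trans (by gcongr; exact hW i) (order_add_one_le_order_lieD hZ (W i))
  have hWZ : m + 1 ≤ (lieD W (Z i)).order := by
    refine (ENat.add_le_add_iff_right ENat.one_ne_top).mp ?_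
    calc m + 1 + 1 = m + 2 := by ring
      _ ≤ m + (Z i).order := by gcongr; exact hZ i
      _ ≤ _ := le_order_lieD_add_one hW (Z i)
  calc m + 1 ≤ min (lieD Z (W i)).order (-lieD W (Z i)).order := by
        rw [order_neg]; exact le_min hZW hWZ
    _ ≤ (brk Z W i).order := by rw [brk, sub_eq_add_neg]; exact min_order_le_add

theorem order_C_mul_add_lieD {Z : Fin 2 → R2} (hZ : ∀ j, 2 ≤ (Z j).order) {δ : ℂ} (hδ : δ ≠ 0)
    (f : R2) : (C δ * f + lieD Z f).order = f.order := by
  have hC : (C δ : R2).order = 0 := by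
    by_contra h
    exact hδ (by simpa using order_ne_zero_iff_constCoeff_eq_zero.mp h)
  have hlow := order_add_one_le_order_lieD hZ f
  rcases eq_or_ne f.order ⊤ with htop | hfin
  · rw [htop]
    refine top_le_iff.mp (le_trans (le_min ?_ ?_) min_order_le_add)
    · simp [order_mul, htop]
    · simpa [htop] using hlow
  rw [order_add_of_order_ne, order_mul, hC, zero_add]
  · exact min_eq_left (le_trans le_self_add hlow)
  · rw [order_mul, hC, zero_add]
    exact ((ENat.add_one_le_iff hfin).mp hlow).ne

theorem stmt18_general (Z W : Fin 2 → R2) (𝔭 : R2) (δ : ℂ)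
    -- Z vanishes to order ≥ 2 (zero constant and linear parts) :
    (hZ0 : ∀ i, MvPowerSeries.constantCoeff (Z i) = 0)
    (hZ1 : ∀ i j : Fin 2, MvPowerSeries.coeff (Finsupp.single j 1) (Z i) = 0)
    -- Y = W/𝔭 is a nonzero meromorphic vector field, W and 𝔭 coprime :
    (h𝔭 : 𝔭 ≠ 0)
    (hW : ¬ (W 0 = 0 ∧ W 1 = 0))
    -- [Z, W/𝔭] = δ·(W/𝔭), denominators cleared :
    (hbrk : ∀ i, 𝔭 * brk Z W i
      = (MvPowerSeries.C δ * 𝔭 + lieD Z 𝔭) * W i) :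
    δ = 0 := by
  by_contra hδ
  have hZ : ∀ j, 2 ≤ (Z j).order := fun j => two_le_order (hZ0 j) (hZ1 j)
  obtain ⟨i, hi⟩ := Finite.exists_min fun j => (W j).order
  have hWi : W i ≠ 0 := by
    intro h
    have hall : ∀ j, W j = 0 := fun j =>
      order_eq_top_iff.mp (top_le_iff.mp (by simpa [h] using hi j))
    exact hW ⟨hall 0, hall 1⟩
  have hfin : 𝔭.order + (W i).order ≠ ⊤ := by simp [h𝔭, hWi]
  refine (ENat.add_one_le_iff hfin).mp ?_ |>.false
  calc 𝔭.order + (W i).order + 1 ≤ 𝔭.order + (brk Z W i).order := by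
        rw [add_assoc]; gcongr; exact le_order_brk hZ hi i
    _ = (C δ * 𝔭 + lieD Z 𝔭).order + (W i).order := by
        rw [← order_mul, hbrk i, order_mul]
    _ = 𝔭.order + (W i).order := by rw [order_C_mul_add_lieD hZ hδ]

theorem stmt18 (Z W : Fin 2 → R2) (𝔭 : R2) (δ : ℂ)
    -- Z vanishes to order ≥ 2 (zero constant and linear parts) :
    (hZ0 : ∀ i, MvPowerSeries.constantCoeff (Z i) = 0)
    (hZ1 : ∀ i j : Fin 2, MvPowerSeries.coeff (Finsupp.single j 1) (Z i) = 0)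
    -- Y = W/𝔭 is a nonzero meromorphic vector field, W and 𝔭 coprime :
    (h𝔭 : 𝔭 ≠ 0)
    (hW : ¬ (W 0 = 0 ∧ W 1 = 0))
    (hcop : ∀ f : R2, Irreducible f → f ∣ 𝔭 → ¬ (f ∣ W 0 ∧ f ∣ W 1))
    -- [Z, W/𝔭] = δ·(W/𝔭), denominators cleared :
    (hbrk : ∀ i, 𝔭 * brk Z W i
      = (MvPowerSeries.C δ * 𝔭 + lieD Z 𝔭) * W i) :
    δ = 0 :=
  stmt18_general Z W 𝔭 δ hZ0 hZ1 h𝔭 hW hbrk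
end
end
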